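/- Assume C_R ⊆ m_R². Then m_S² = m_R², and consequently the embedding dimension of S equals n + s; that is, dim_k (m_S/m_S²) = dim_k (m_R/m_R²) + s(R). -/

import Mathlib

open PowerSeries
set_option synthInstance.maxHeartbeats 1000000
set_option maxHeartbeats 1000000

noncomputable section

def mxl {k : Type*} [Field k] (R : Subalgebra k (PowerSeries k)) : Ideal R :=
  RingHom.ker ((constantCoeff : PowerSeries k →+* k).comp R.val.toRingHom)

def condIdeal {k : Type*} [Field k] (R : Subalgebra k (PowerSeries k)) : Ideal R where
  carrier := {r : R | ∀ g : PowerSeries k, (r : PowerSeries k) * g ∈ R}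
  add_mem' := by
    intro a b ha hb g
    have := R.add_mem (ha g) (hb g)
    simpa [add_mul] using this
  zero_mem' := by
    intro g
    simpa using R.zero_mem
  smul_mem' := by
    intro c x hx g
    have h : ((c • x : R) : PowerSeries k) * g
        = (c : PowerSeries k) * ((x : PowerSeries k) * g) := by
      rw [smul_eq_mul, MulMemClass.coe_mul]
      ring
    rw [h]
    exact R.mul_mem c.2 (hx g)

/-- The reduced type `s(R) = dim_k (C_R + x₁R)/(x₁R)`, computed as the dimension of the
image of the conductor in `R/(x₁)`. -/
def redType {k : Type*} [Field k] (R : Subalgebra k (PowerSeries k)) (x1 : R) : ℕ :=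
  Module.finrank k (Submodule.restrictScalars k
    (Ideal.map (Ideal.Quotient.mk (Ideal.span {x1})) (condIdeal R)))


/-- The embedding dimension `dim_k m/m²` of a subalgebra of `k⟦t⟧`. -/
def edim {k : Type*} [Field k] (A : Subalgebra k (PowerSeries k)) : ℕ :=
  Module.finrank k (Submodule.restrictScalars k
    (Ideal.map (Ideal.Quotient.mk ((mxl A) ^ 2)) (mxl A)))

/-!
Put `D = {h ∈ k⟦t⟧ | x₁ h ∈ C_R}`. Every element of `m_R` has order at least `a₁ = ord x₁`, so
is divisible by `x₁`; as `C_R ⊆ m_R²`, every `c ∈ C_R` is divisible by `x₁²`, hence every element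
of `D` by `x₁`, and `D = C_R / x₁`. Since `C_R` is an ideal of `k⟦t⟧`, so is `D`, and
`m_R D ⊆ C_R`, `D² ⊆ C_R ⊆ D`. Therefore `S = R + D`, `m_S = m_R + D` and
`m_S² = m_R² + m_R D + D² = m_R²`. Multiplication by `x₁` maps `D` onto `C_R` and `D ∩ m_R` onto
`C_R ∩ x₁R`, so `m_S / m_R ≅ D / (D ∩ m_R) ≅ (C_R + x₁R) / x₁R`, and
`dim m_S/m_S² = dim m_S/m_R² = dim m_R/m_R² + dim m_S/m_R = n + s`.
-/

namespace PowerSeries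

variable {k : Type*} [Field k]

theorem dvd_of_order_le {f g : k⟦X⟧} (h : f.order ≤ g.order) : f ∣ g := by
  rcases eq_or_ne f 0 with rfl | hf
  · rw [order_zero, top_le_iff, order_eq_top] at h
    simp [h]
  have hunit : IsUnit (divXPowOrder f) := isUnit_iff_constantCoeff.mpr <|
    isUnit_iff_ne_zero.mpr (constantCoeff_divXPowOrder_eq_zero_iff.not.mpr hf)
  rw [← X_pow_order_mul_divXPowOrder (f := f), hunit.mul_right_dvd, X_pow_dvd_iff]
  intro m hm
  refine coeff_of_lt_order m (lt_of_lt_of_le ?_ h)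
  rw [← coe_toNat_order hf]
  exact_mod_cast hm

theorem finiteDimensional_quotient_comap_of_X_pow_mul_mem (U W : Submodule k k⟦X⟧) (n : ℕ)
    (hW : ∀ g : k⟦X⟧, X ^ n * g ∈ W) : FiniteDimensional k (U ⧸ W.comap U.subtype) := by
  let ψ : U →ₗ[k] Fin n → k := LinearMap.pi fun i => coeff (i : ℕ) ∘ₗ U.subtype
  have hle : LinearMap.ker ψ ≤ W.comap U.subtype := by
    intro f hf
    obtain ⟨g, hg⟩ : X ^ n ∣ (f : k⟦X⟧) := X_pow_dvd_iff.mpr fun m hm => congr_fun hf ⟨m, hm⟩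
    simpa [hg] using hW g
  have : FiniteDimensional k (U ⧸ LinearMap.ker ψ) := ψ.quotKerEquivRange.symm.finiteDimensional
  exact Module.Finite.of_surjective _ (Submodule.factor_surjective hle)

end PowerSeries

namespace Submodule

variable {k M N : Type*} [Field k] [AddCommGroup M] [Module k M] [AddCommGroup N] [Module k N]

theorem finrank_quotient_comap_map_of_injective {φ : M →ₗ[k] N} (hφ : Function.Injective φ)
    (p q : Submodule k M) :
    Module.finrank k (p.map φ ⧸ (q.map φ).comap (p.map φ).subtype) =
      Module.finrank k (p ⧸ q.comap p.subtype) := by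
  let f := ((q.map φ).comap (p.map φ).subtype).mkQ ∘ₗ φ.submoduleMap p
  have hf : Function.Surjective f := (mkQ_surjective _).comp (φ.submoduleMap_surjective p)
  have hker : LinearMap.ker f = q.comap p.subtype := by
    ext x
    simp [f, hφ.eq_iff]
  rw [← (f.quotKerEquivOfSurjective hf).finrank_eq, hker]

theorem finrank_quotient_comap_eq_add {W V U : Submodule k M} (hWV : W ≤ V) (hVU : V ≤ U)
    [FiniteDimensional k (U ⧸ W.comap U.subtype)] :
    Module.finrank k (U ⧸ W.comap U.subtype) =
      Module.finrank k (V ⧸ W.comap V.subtype) + Module.finrank k (U ⧸ V.comap U.subtype) := by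
  set w := W.comap U.subtype
  set v := V.comap U.subtype
  let g := w.mkQ ∘ₗ inclusion hVU
  have hker : LinearMap.ker g = W.comap V.subtype := by
    ext
    simp [g, w]
  have hrange : LinearMap.range g = v.map w.mkQ := by
    rw [LinearMap.range_comp, range_inclusion]
  rw [← (quotientQuotientEquivQuotient w v (comap_mono hWV)).finrank_eq,
    ← (quotEquivOfEq _ _ hker).finrank_eq, g.quotKerEquivRange.finrank_eq, hrange, add_comm]
  exact (finrank_quotient_add_finrank _).symm

end Submodule

theorem Ideal.finrank_restrictScalars_map_quotient_mk {k A : Type*} [Field k] [CommRing A]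
    [Algebra k A] (I J : Ideal A) :
    Module.finrank k ((I.map (Ideal.Quotient.mk J)).restrictScalars k) =
      Module.finrank k
        (I.restrictScalars k ⧸ (J.restrictScalars k).comap (I.restrictScalars k).subtype) := by
  let g := (Ideal.Quotient.mkₐ k J).toLinearMap ∘ₗ (I.restrictScalars k).subtype
  have hker : LinearMap.ker g = (J.restrictScalars k).comap (I.restrictScalars k).subtype := by
    ext
    simp [g, Ideal.Quotient.eq_zero_iff_mem]
  have hrange : LinearMap.range g = (I.map (Ideal.Quotient.mk J)).restrictScalars k := by
    ext
    simp [g, Ideal.mem_map_iff_of_surjective _ Ideal.Quotient.mk_surjective]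
  rw [← hrange, ← hker]
  exact g.quotKerEquivRange.finrank_eq.symm

namespace Subalgebra

section Conductor

variable {k B : Type*} [Field k] [CommRing B] [Algebra k B]

theorem finrank_restrictScalars_map_quotient_mk (A : Subalgebra k B) (I J : Ideal A) :
    Module.finrank k ((I.map (Ideal.Quotient.mk J)).restrictScalars k) =
      Module.finrank k ((I.restrictScalars k).map A.val.toLinearMap ⧸
        ((J.restrictScalars k).map A.val.toLinearMap).comap
          ((I.restrictScalars k).map A.val.toLinearMap).subtype) := by
  rw [Ideal.finrank_restrictScalars_map_quotient_mk,
    Submodule.finrank_quotient_comap_map_of_injective Subtype.val_injective]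

theorem map_restrictScalars_span_singleton (A : Subalgebra k B) (x : A) :
    ((Ideal.span {x}).restrictScalars k).map A.val.toLinearMap =
      (toSubmodule A).map (LinearMap.mulLeft k (x : B)) := by
  ext f
  simp only [Submodule.mem_map, Submodule.restrictScalars_mem, Ideal.mem_span_singleton',
    mem_toSubmodule, LinearMap.mulLeft_apply]
  constructor
  · rintro ⟨_, ⟨a, rfl⟩, rfl⟩
    exact ⟨a, a.2, by simp [mul_comm]⟩
  · rintro ⟨a, ha, rfl⟩
    exact ⟨⟨a, ha⟩ * x, ⟨⟨a, ha⟩, rfl⟩, by simp [mul_comm]⟩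

def conductor (R : Subalgebra k B) : Submodule k B where
  carrier := {h | ∀ g, h * g ∈ R}
  add_mem' ha hb g := by simpa [add_mul] using R.add_mem (ha g) (hb g)
  zero_mem' g := by simp
  smul_mem' c h hh g := by simpa [smul_mul_assoc] using R.smul_mem (hh g) c

variable {R : Subalgebra k B}

theorem mem_of_mem_conductor {c : B} (hc : c ∈ R.conductor) : c ∈ R := by
  simpa using hc 1

theorem mul_mem_conductor {c : B} (hc : c ∈ R.conductor) (g : B) : c * g ∈ R.conductor :=
  fun g' => by simpa [mul_assoc] using hc (g * g')

/-- The paper's `C_R / x` (equal to it as soon as `x` divides every element of `C_R`). -/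
def conductorDiv (R : Subalgebra k B) (x : B) : Submodule k B :=
  R.conductor.comap (LinearMap.mulLeft k x)

variable {x : B}

theorem mem_conductorDiv {h : B} : h ∈ R.conductorDiv x ↔ x * h ∈ R.conductor := Iff.rfl

theorem coe_conductorDiv : (R.conductorDiv x : Set B) = {h | ∀ g, x * h * g ∈ R} := rfl

theorem conductor_le_conductorDiv : R.conductor ≤ R.conductorDiv x := fun c hc => by
  rw [mem_conductorDiv, mul_comm]
  exact mul_mem_conductor hc x

theorem mul_conductorDiv_le (P : Submodule k B) : P * R.conductorDiv x ≤ R.conductorDiv x :=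
  Submodule.mul_le.mpr fun a _ d hd => by
    rw [mem_conductorDiv, mul_left_comm, mul_comm]
    exact mul_mem_conductor hd a

theorem mul_conductorDiv_le_conductor {P : Submodule k B} (hP : ∀ a ∈ P, x ∣ a) :
    P * R.conductorDiv x ≤ R.conductor :=
  Submodule.mul_le.mpr fun a ha d hd => by
    obtain ⟨e, rfl⟩ := hP a ha
    rw [mul_right_comm]
    exact mul_mem_conductor hd e

theorem mul_self_dvd_of_mem_mul {M : Submodule k B} (hM : ∀ a ∈ M, x ∣ a) {f : B}
    (hf : f ∈ M * M) : x * x ∣ f :=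
  Submodule.mul_induction_on hf (fun a ha b hb => mul_dvd_mul (hM a ha) (hM b hb))
    fun _ _ => dvd_add

theorem dvd_of_mem_conductorDiv [IsDomain B] (hx : x ≠ 0) {M : Submodule k B}
    (hM : ∀ a ∈ M, x ∣ a) (hC : R.conductor ≤ M * M) {d : B} (hd : d ∈ R.conductorDiv x) :
    x ∣ d := by
  obtain ⟨e, he⟩ := mul_self_dvd_of_mem_mul hM (hC hd)
  exact ⟨e, mul_left_cancel₀ hx (he.trans (mul_assoc x x e))⟩

theorem toSubmodule_adjoin_union_conductorDiv (hD : ∀ d ∈ R.conductorDiv x, x ∣ d) :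
    toSubmodule (Algebra.adjoin k ((R : Set B) ∪ R.conductorDiv x)) =
      toSubmodule R ⊔ R.conductorDiv x := by
  set D := R.conductorDiv x
  have hmul : (toSubmodule R ⊔ D) * (toSubmodule R ⊔ D) ≤ toSubmodule R ⊔ D := by
    rw [Submodule.sup_mul, Submodule.mul_sup, Submodule.mul_sup, Submodule.mul_comm D]
    refine sup_le (sup_le ?_ ?_) (sup_le ?_ ?_)
    · exact le_sup_of_le_left (isIdempotentElem_toSubmodule R).le
    · exact le_sup_of_le_right (mul_conductorDiv_le _)
    · exact le_sup_of_le_right (mul_conductorDiv_le _)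
    · exact le_sup_of_le_right ((mul_conductorDiv_le_conductor hD).trans conductor_le_conductorDiv)
  let T := (toSubmodule R ⊔ D).toSubalgebra (Submodule.mem_sup_left R.one_mem)
    fun a b ha hb => hmul (Submodule.mul_mem_mul ha hb)
  refine le_antisymm ?_ (sup_le ?_ ?_)
  · exact (Algebra.adjoin_le (S := T) (Set.union_subset
      (fun f hf => Submodule.mem_sup_left hf) fun f hf => Submodule.mem_sup_right hf) :)
  · exact fun f hf => Algebra.subset_adjoin (Or.inl hf)
  · exact fun f hf => Algebra.subset_adjoin (Or.inr hf)

theorem sup_conductorDiv_mul_self {M : Submodule k B} (hM : ∀ a ∈ M, x ∣ a)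
    (hD : ∀ d ∈ R.conductorDiv x, x ∣ d) (hC : R.conductor ≤ M * M) :
    (M ⊔ R.conductorDiv x) * (M ⊔ R.conductorDiv x) = M * M := by
  refine le_antisymm ?_ (mul_le_mul' le_sup_left le_sup_left)
  rw [Submodule.sup_mul, Submodule.mul_sup, Submodule.mul_sup,
    Submodule.mul_comm (R.conductorDiv x)]
  exact sup_le (sup_le le_rfl ((mul_conductorDiv_le_conductor hM).trans hC))
    (sup_le ((mul_conductorDiv_le_conductor hM).trans hC)
      ((mul_conductorDiv_le_conductor hD).trans hC))

end Conductor

section PowerSeries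

variable {k : Type*} [Field k]

/-- The maximal ideal `m_A`, as a `k`-subspace of `k⟦X⟧`: ideals of different subalgebras are
compared there. -/
def maxSubmodule (A : Subalgebra k k⟦X⟧) : Submodule k k⟦X⟧ :=
  toSubmodule A ⊓ LinearMap.ker (coeff 0)

theorem mem_maxSubmodule {A : Subalgebra k k⟦X⟧} {f : k⟦X⟧} :
    f ∈ A.maxSubmodule ↔ f ∈ A ∧ constantCoeff f = 0 := by
  simp only [maxSubmodule, Submodule.mem_inf, mem_toSubmodule, LinearMap.mem_ker,
    coeff_zero_eq_constantCoeff_apply]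

theorem maxSubmodule_mul_self_le (A : Subalgebra k k⟦X⟧) :
    A.maxSubmodule * A.maxSubmodule ≤ A.maxSubmodule :=
  Submodule.mul_le.mpr fun a ha b hb => mem_maxSubmodule.mpr
    ⟨A.mul_mem (mem_maxSubmodule.mp ha).1 (mem_maxSubmodule.mp hb).1,
      by simp [(mem_maxSubmodule.mp ha).2]⟩

theorem X_pow_mul_mem_maxSubmodule_mul_self {A : Subalgebra k k⟦X⟧} {N : ℕ} (hN : N ≠ 0)
    (hXN : ∀ g : k⟦X⟧, X ^ N * g ∈ A) (g : k⟦X⟧) :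
    X ^ (2 * N) * g ∈ A.maxSubmodule * A.maxSubmodule := by
  have hmem : ∀ g : k⟦X⟧, X ^ N * g ∈ A.maxSubmodule := fun g =>
    mem_maxSubmodule.mpr ⟨hXN g, by simp [hN]⟩
  rw [show X ^ (2 * N) * g = (X ^ N * 1) * (X ^ N * g) by ring]
  exact Submodule.mul_mem_mul (hmem 1) (hmem g)

theorem dvd_of_mem_maxSubmodule {A : Subalgebra k k⟦X⟧} {x f : k⟦X⟧}
    (hmin : ∀ g ∈ A, g ≠ 0 → constantCoeff g = 0 → x.order ≤ g.order)
    (hf : f ∈ A.maxSubmodule) : x ∣ f := by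
  obtain ⟨hfA, hf0⟩ := mem_maxSubmodule.mp hf
  rcases eq_or_ne f 0 with rfl | hf
  · exact dvd_zero x
  · exact dvd_of_order_le (hmin f hfA hf hf0)

variable {R : Subalgebra k k⟦X⟧} {x : k⟦X⟧}

theorem conductorDiv_le_ker_coeff_zero (hx0 : constantCoeff x = 0)
    (hD : ∀ d ∈ R.conductorDiv x, x ∣ d) : R.conductorDiv x ≤ LinearMap.ker (coeff 0) :=
  fun d hd => by
    obtain ⟨e, rfl⟩ := hD d hd
    simp [coeff_zero_eq_constantCoeff_apply, hx0]

theorem maxSubmodule_adjoin_union_conductorDiv (hx0 : constantCoeff x = 0)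
    (hD : ∀ d ∈ R.conductorDiv x, x ∣ d) :
    maxSubmodule (Algebra.adjoin k ((R : Set k⟦X⟧) ∪ R.conductorDiv x)) =
      R.maxSubmodule ⊔ R.conductorDiv x := by
  rw [maxSubmodule, toSubmodule_adjoin_union_conductorDiv hD, sup_comm,
    sup_inf_assoc_of_le _ (conductorDiv_le_ker_coeff_zero hx0 hD), sup_comm]
  rfl

theorem finrank_sup_conductorDiv_quotient (hx : x ≠ 0) (hx0 : constantCoeff x = 0)
    (hD : ∀ d ∈ R.conductorDiv x, x ∣ d) :
    Module.finrank k (↥(R.maxSubmodule ⊔ R.conductorDiv x) ⧸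
        R.maxSubmodule.comap (R.maxSubmodule ⊔ R.conductorDiv x).subtype) =
      Module.finrank k (R.conductor ⧸
        ((toSubmodule R).map (LinearMap.mulLeft k x)).comap R.conductor.subtype) := by
  set D := R.conductorDiv x
  have hDC : D.map (LinearMap.mulLeft k x) = R.conductor := by
    refine le_antisymm (Submodule.map_le_iff_le_comap.mpr le_rfl) fun c hc => ?_
    obtain ⟨e, rfl⟩ := hD c (conductor_le_conductorDiv hc)
    exact ⟨e, hc, rfl⟩
  have hDM : R.maxSubmodule.comap D.subtype = (toSubmodule R).comap D.subtype := by
    ext ⟨d, hd⟩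
    simp only [Submodule.mem_comap, Submodule.subtype_apply, maxSubmodule, Submodule.mem_inf,
      conductorDiv_le_ker_coeff_zero hx0 hD hd, and_true]
  rw [sup_comm, ← (LinearMap.quotientInfEquivSupQuotient D _).finrank_eq,
    Submodule.comap_subtype_self, top_inf_eq, hDM, ← hDC,
    Submodule.finrank_quotient_comap_map_of_injective (mul_right_injective₀ hx)]

end PowerSeries

end Subalgebra

section

variable {k : Type*} [Field k]

theorem map_mxl (A : Subalgebra k k⟦X⟧) :
    ((mxl A).restrictScalars k).map A.val.toLinearMap = A.maxSubmodule := by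
  ext f
  simp [mxl, Subalgebra.mem_maxSubmodule, and_comm]

theorem map_mxl_sq (A : Subalgebra k k⟦X⟧) :
    (((mxl A) ^ 2).restrictScalars k).map A.val.toLinearMap =
      A.maxSubmodule * A.maxSubmodule := by
  rw [pow_two, Submodule.restrictScalars_mul, Submodule.map_mul, map_mxl]

theorem image_val_mxl_sq (A : Subalgebra k k⟦X⟧) :
    Subtype.val '' (((mxl A) ^ 2 : Ideal A) : Set A) =
      ((A.maxSubmodule * A.maxSubmodule : Submodule k k⟦X⟧) : Set k⟦X⟧) := by
  rw [← map_mxl_sq, Submodule.map_coe]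
  rfl

theorem edim_eq_finrank (A : Subalgebra k k⟦X⟧) :
    edim A = Module.finrank k
      (A.maxSubmodule ⧸ (A.maxSubmodule * A.maxSubmodule).comap A.maxSubmodule.subtype) := by
  rw [edim, Subalgebra.finrank_restrictScalars_map_quotient_mk, map_mxl, map_mxl_sq]

theorem conductor_le_maxSubmodule_mul_self {R : Subalgebra k k⟦X⟧}
    (hC : ∀ r : R, (∀ g : k⟦X⟧, (r : k⟦X⟧) * g ∈ R) → r ∈ (mxl R) ^ 2) :
    R.conductor ≤ R.maxSubmodule * R.maxSubmodule := fun c hc => by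
  rw [← map_mxl_sq]
  exact ⟨⟨c, Subalgebra.mem_of_mem_conductor hc⟩, hC _ hc, rfl⟩

theorem map_condIdeal (R : Subalgebra k k⟦X⟧) :
    ((condIdeal R).restrictScalars k).map R.val.toLinearMap = R.conductor := by
  ext f
  constructor
  · rintro ⟨a, ha, rfl⟩
    exact ha
  · intro hf
    exact ⟨⟨f, Subalgebra.mem_of_mem_conductor hf⟩, hf, rfl⟩

theorem redType_eq_finrank (R : Subalgebra k k⟦X⟧) (x : R) :
    redType R x = Module.finrank k (R.conductor ⧸
      ((Subalgebra.toSubmodule R).map (LinearMap.mulLeft k (x : k⟦X⟧))).comap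
        R.conductor.subtype) := by
  rw [redType, Subalgebra.finrank_restrictScalars_map_quotient_mk, map_condIdeal,
    Subalgebra.map_restrictScalars_span_singleton]

end

theorem stmt9_general {k : Type*} [Field k]
    (R : Subalgebra k (PowerSeries k))
    (hN : ∃ N : ℕ, 1 ≤ N ∧ ∀ g : PowerSeries k, (X : PowerSeries k) ^ N * g ∈ R)
    (a1 : ℕ) (ha1pos : 0 < a1) (x1 : PowerSeries k) (hx1R : x1 ∈ R)
    (hx1ord : x1.order = a1)
    (ha1min : ∀ f ∈ R, f ≠ 0 → (constantCoeff : PowerSeries k →+* k) f = 0 → (a1 : ℕ∞) ≤ f.order)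
    (hC : ∀ r : R, (∀ g : PowerSeries k, (r : PowerSeries k) * g ∈ R) → r ∈ (mxl R) ^ 2)
    (S : Subalgebra k (PowerSeries k))
    (hS : S = Algebra.adjoin k ((R : Set (PowerSeries k)) ∪
        {h : PowerSeries k | ∀ g : PowerSeries k, (x1 * h) * g ∈ R})) :
    -- m_S² = m_R² as subsets of k⟦t⟧
    (Subtype.val '' (((mxl S) ^ 2 : Ideal S) : Set S)
      = Subtype.val '' (((mxl R) ^ 2 : Ideal R) : Set R)) ∧
    -- edim S = edim R + s(R)
    edim S = edim R + redType R ⟨x1, hx1R⟩ := by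
  obtain ⟨N, hN1, hXN⟩ := hN
  have hx : x1 ≠ 0 := fun h => by simp [h] at hx1ord
  have hx0 : constantCoeff x1 = 0 := by
    simpa using coeff_of_lt_order 0 (by rw [hx1ord]; exact_mod_cast ha1pos)
  have hdvd : ∀ f ∈ R.maxSubmodule, x1 ∣ f := fun _ =>
    Subalgebra.dvd_of_mem_maxSubmodule (hx1ord ▸ ha1min)
  have hCsq := conductor_le_maxSubmodule_mul_self hC
  have hD : ∀ d ∈ R.conductorDiv x1, x1 ∣ d := fun _ =>
    Subalgebra.dvd_of_mem_conductorDiv hx hdvd hCsq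
  rw [← Subalgebra.coe_conductorDiv] at hS
  subst hS
  have hMS := Subalgebra.maxSubmodule_adjoin_union_conductorDiv hx0 hD
  have hsq := Subalgebra.sup_conductorDiv_mul_self hdvd hD hCsq
  refine ⟨by rw [image_val_mxl_sq, image_val_mxl_sq, hMS, hsq], ?_⟩
  have := finiteDimensional_quotient_comap_of_X_pow_mul_mem (R.maxSubmodule ⊔ R.conductorDiv x1)
    _ _ (Subalgebra.X_pow_mul_mem_maxSubmodule_mul_self (by omega) hXN)
  rw [edim_eq_finrank, edim_eq_finrank, hMS, hsq, redType_eq_finrank,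
    Submodule.finrank_quotient_comap_eq_add R.maxSubmodule_mul_self_le le_sup_left,
    Subalgebra.finrank_sup_conductorDiv_quotient hx hx0 hD]

theorem stmt9 {k : Type*} [Field k] [IsAlgClosed k] [CharZero k]
    (R : Subalgebra k (PowerSeries k)) (hR : R ≠ ⊤)
    (hN : ∃ N : ℕ, 1 ≤ N ∧ ∀ g : PowerSeries k, (X : PowerSeries k) ^ N * g ∈ R)
    (a1 : ℕ) (ha1pos : 0 < a1) (x1 : PowerSeries k) (hx1R : x1 ∈ R)
    (hx1ord : x1.order = a1)
    (ha1min : ∀ f ∈ R, f ≠ 0 → (constantCoeff : PowerSeries k →+* k) f = 0 → (a1 : ℕ∞) ≤ f.order)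
    (hC : ∀ r : R, (∀ g : PowerSeries k, (r : PowerSeries k) * g ∈ R) → r ∈ (mxl R) ^ 2)
    (S : Subalgebra k (PowerSeries k))
    (hS : S = Algebra.adjoin k ((R : Set (PowerSeries k)) ∪
        {h : PowerSeries k | ∀ g : PowerSeries k, (x1 * h) * g ∈ R})) :
    -- m_S² = m_R² as subsets of k⟦t⟧
    (Subtype.val '' (((mxl S) ^ 2 : Ideal S) : Set S)
      = Subtype.val '' (((mxl R) ^ 2 : Ideal R) : Set R)) ∧
    -- edim S = edim R + s(R)
    edim S = edim R + redType R ⟨x1, hx1R⟩ :=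
  stmt9_general R hN a1 ha1pos x1 hx1R hx1ord ha1min hC S hS
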